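/- Suppose the loss has the bilinear form ℓ(z, θ) = q(θ)·φ(z) and the posterior mean of φ satisfies E[E_{z∼D}[φ(z)] | Z] = (φ₀ + Σᵢ φ(zᵢ))/(n + n₀). Then with R*(θ) = (1/n)·q(θ)·φ₀, for every θ: L̂(θ) + R*(θ) = ((n + n₀)/n)·L̄(θ, Z), where L̂(θ) = (1/n)Σᵢ q(θ)·φ(zᵢ) and L̄(θ, Z) = q(θ)·E[E_{z∼D}[φ(z)] | Z]. In particular, θ minimizes L̂ + R* over Θ if and only if θ minimizes L̄(·, Z), assuming n + n₀ > 0 and n > 0. -/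
import Mathlib

/-- For bilinear losses with linear posterior mean, `L̂ + R*` is a positive
multiple of the conditional expected test loss, hence has the same minimizers. -/
theorem stmt_8 {Θ : Type*} {d n : ℕ} (hn : 0 < n)
    (q : Θ → Fin d → ℝ) (ψ : Fin n → Fin d → ℝ)  -- ψ i = φ (z i)
    (n₀ : ℝ) (hn₀ : 0 < (n : ℝ) + n₀) (φ₀ : Fin d → ℝ)
    (μ : Fin d → ℝ) (hμ : ∀ j, μ j = (φ₀ j + ∑ i, ψ i j) / ((n : ℝ) + n₀))
    (Lbar Lhat Rstar : Θ → ℝ)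
    (hLbar : ∀ θ, Lbar θ = ∑ j, q θ j * μ j)
    (hLhat : ∀ θ, Lhat θ = (1 / (n : ℝ)) * ∑ i, ∑ j, q θ j * ψ i j)
    (hRstar : ∀ θ, Rstar θ = (1 / (n : ℝ)) * ∑ j, q θ j * φ₀ j) :
    (∀ θ, Lhat θ + Rstar θ = (((n : ℝ) + n₀) / (n : ℝ)) * Lbar θ) ∧
    (∀ θ₀ : Θ, (∀ θ, Lhat θ₀ + Rstar θ₀ ≤ Lhat θ + Rstar θ) ↔
      (∀ θ, Lbar θ₀ ≤ Lbar θ)) := by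
  have hnR : (0 : ℝ) < (n : ℝ) := by exact_mod_cast hn
  have key : ∀ θ, Lhat θ + Rstar θ = (((n : ℝ) + n₀) / (n : ℝ)) * Lbar θ := by
    intro θ
    rw [hLhat, hRstar, hLbar]
    rw [Finset.sum_comm]
    simp only [hμ]
    rw [Finset.mul_sum, Finset.mul_sum, ← Finset.sum_add_distrib, Finset.mul_sum]
    apply Finset.sum_congr rfl
    intro j _
    rw [← Finset.mul_sum]
    field_simp
    ring
  refine ⟨key, fun θ₀ => ?_⟩
  have hc : (0:ℝ) < ((n : ℝ) + n₀) / (n : ℝ) := div_pos hn₀ hnR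
  constructor
  · intro h θ
    have := h θ
    rw [key, key] at this
    exact le_of_mul_le_mul_left this hc
  · intro h θ
    rw [key, key]
    exact mul_le_mul_of_nonneg_left (h θ) hc.le
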